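/- arXiv:2109.11417 — 8 statements merged into one kernel-verified Lean document; each statement's English description precedes it below -/
import Mathlib

section
/- Let T be a proper (s,n)-table in a normal form and let K(T) be the associated ideal. Then for any (i,j) with 0 ≤ i ≤ s and i < j ≤ n: α_{i,j} ≠ 0 if and only if m_{i,j} is a minimal generator of K(T) (i.e., m_{i,j} is not divisible by any other generator m_{p,q} with (p,q) ≠ (i,j)). -/
open MvPolynomial Finset

/-- An `(s,n)`-table: an `(s+1) × n` matrix of non-negative integers `α i j`
(rows `0..s`, columns `1..n`, with `d j := α 0 j`) satisfying the table axioms. -/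
def IsTable (s n : ℕ) (α : ℕ → ℕ → ℕ) : Prop :=
  s < n ∧
  (∀ i j, 1 ≤ i → i ≤ s → j < i → α i j = 0) ∧
  (∀ j, 1 ≤ j → j ≤ n → ∑ i ∈ Finset.Icc 1 s, α i j ≤ α 0 j) ∧
  (∀ k, 1 ≤ k → k ≤ s →
    α 0 k = ∑ i ∈ Finset.Icc 1 (k - 1), α i k + ∑ j ∈ Finset.Icc (k + 1) n, α k j
      + (if k + 1 ≤ s then α (k + 1) (k + 1) else 0))

/-- The generator `m_{i,j}` of `K(T)`, with columns `t` mapped to the variable `v t`: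
`m_{i,j} = x_1^{d_1-α_{1,1}} ⋯ x_i^{d_i-α_{1,i}-⋯-α_{i,i}} · x_j^{d_j-α_{1,j}-⋯-α_{i,j}}`. -/
noncomputable def mGenV (𝕜 : Type*) [Field 𝕜] (v : ℕ → ℕ) (α : ℕ → ℕ → ℕ) (i j : ℕ) :
    MvPolynomial ℕ 𝕜 :=
  (∏ t ∈ Finset.Icc 1 i, X (v t) ^ (α 0 t - ∑ r ∈ Finset.Icc 1 i, α r t)) *
    X (v j) ^ (α 0 j - ∑ r ∈ Finset.Icc 1 i, α r j)

/-- The generator `m_{i,j}` with the default variable order. -/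
noncomputable def mGen (𝕜 : Type*) [Field 𝕜] (α : ℕ → ℕ → ℕ) (i j : ℕ) :
    MvPolynomial ℕ 𝕜 :=
  mGenV 𝕜 id α i j

/-- The ideal `K(T)` associated to an `(s,n)`-table, generated by all `m_{i,j}`,
`0 ≤ i ≤ s`, `i < j ≤ n`, in `𝕜[x_1,…,x_n]` (viewed inside `MvPolynomial ℕ 𝕜`). -/
noncomputable def KIdeal (𝕜 : Type*) [Field 𝕜] (s n : ℕ) (α : ℕ → ℕ → ℕ) :
    Ideal (MvPolynomial ℕ 𝕜) :=
  Ideal.span {m | ∃ i j, i ≤ s ∧ i < j ∧ j ≤ n ∧ m = mGen 𝕜 α i j}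

/-- A table is in normal form: nonzero diagonal entries, no unconstrained almost-zero
columns, and strict column inequalities. -/
def NormalForm (s n : ℕ) (α : ℕ → ℕ → ℕ) : Prop :=
  (∀ i, 1 ≤ i → i ≤ s → α i i ≠ 0) ∧
  (1 ≤ s → ∀ j, s + 1 ≤ j → j ≤ n → ∃ i, 1 ≤ i ∧ i ≤ s ∧ α i j ≠ 0) ∧
  (∀ j, 1 ≤ j → j ≤ n → ∑ i ∈ Finset.Icc 1 s, α i j < α 0 j)

/-
Every generator is a monomial, so divisibility among generators is comparison of exponent
vectors. The exponent of `x_t` in `m_{p,q}` is the residual degree `d_t - α_{1,t} - ⋯ - α_{p,t}`,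
which in normal form is positive and strictly drops between rows `p < k` once `α_{k,t} ≠ 0`.
If `α_{i,j} ≠ 0` and `m_{p,q} ∣ m_{i,j}`, comparing the exponent of `x_q` rules out
`q ≤ i` (as `α_{q,q} ≠ 0`), `q ∉ {1,…,i,j}` and `q = j, p < i`; for `q = j, p > i` the
variable `x_{i+1}` divides `m_{p,j}` but not `m_{i,j}`. Conversely, if `α_{i,j} = 0` then
`i ≥ 1`, and as row `i` vanishes left of the diagonal, `m_{i-1,j}` divides `m_{i,j}`.
-/

def residualDegree (α : ℕ → ℕ → ℕ) (i t : ℕ) : ℕ := α 0 t - ∑ r ∈ Icc 1 i, α r t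

noncomputable def mGenExponent (α : ℕ → ℕ → ℕ) (i j : ℕ) : ℕ →₀ ℕ :=
  (∑ t ∈ Icc 1 i, Finsupp.single t (residualDegree α i t)) +
    Finsupp.single j (residualDegree α i j)

section Exponents

variable {α : ℕ → ℕ → ℕ}

lemma residualDegree_lt_of_lt {p k i t : ℕ} (hpk : p < k) (hki : k ≤ i) (hk : α k t ≠ 0)
    (hi : 0 < residualDegree α i t) : residualDegree α i t < residualDegree α p t := by
  have hsub : insert k (Icc 1 p) ⊆ Icc 1 i := by
    intro x hx
    simp only [mem_insert, mem_Icc] at hx ⊢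
    omega
  have hsum : ∑ r ∈ Icc 1 p, α r t + α k t ≤ ∑ r ∈ Icc 1 i, α r t := by
    have h := sum_le_sum_of_subset (f := fun r => α r t) hsub
    rwa [sum_insert (by simp; omega), add_comm] at h
  unfold residualDegree at hi ⊢
  omega

lemma residualDegree_succ_of_eq_zero {i t : ℕ} (ht : α (i + 1) t = 0) :
    residualDegree α (i + 1) t = residualDegree α i t := by
  simp [residualDegree, sum_Icc_succ_top, ht]

lemma mGenExponent_apply (i j v : ℕ) :
    mGenExponent α i j v = (if v ∈ Icc 1 i then residualDegree α i v else 0) +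
      (if v = j then residualDegree α i j else 0) := by
  simp only [mGenExponent, Finsupp.add_apply, Finsupp.finsetSum_apply, Finsupp.single_apply,
    sum_ite_eq, eq_comm]

lemma mGenExponent_apply_of_mem_Icc {i j v : ℕ} (hv : v ∈ Icc 1 i) (hij : i < j) :
    mGenExponent α i j v = residualDegree α i v := by
  rw [mGenExponent_apply, if_pos hv, if_neg (by simp only [mem_Icc] at hv; omega), add_zero]

lemma mGenExponent_apply_self {i j : ℕ} (hij : i < j) :
    mGenExponent α i j j = residualDegree α i j := by
  rw [mGenExponent_apply, if_neg (by simp; omega), if_pos rfl, zero_add]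

lemma mGenExponent_apply_of_lt {i j v : ℕ} (hiv : i < v) (hvj : v ≠ j) :
    mGenExponent α i j v = 0 := by
  rw [mGenExponent_apply, if_neg (by simp; omega), if_neg hvj, add_zero]

lemma mGenExponent_le_succ {i j : ℕ} (hrow : ∀ t, t ≤ i → α (i + 1) t = 0)
    (hj : α (i + 1) j = 0) : mGenExponent α i j ≤ mGenExponent α (i + 1) j := by
  intro v
  simp only [mGenExponent_apply, residualDegree_succ_of_eq_zero hj]
  by_cases hv : v ∈ Icc 1 i
  · have hv' : v ∈ Icc 1 (i + 1) := by simp only [mem_Icc] at hv ⊢; omega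
    rw [if_pos hv, if_pos hv',
      residualDegree_succ_of_eq_zero (hrow v (mem_Icc.1 hv).2)]
  · rw [if_neg hv, zero_add]
    exact le_add_self

end Exponents

lemma mGen_eq_monomial (𝕜 : Type*) [Field 𝕜] (α : ℕ → ℕ → ℕ) (i j : ℕ) :
    mGen 𝕜 α i j = monomial (mGenExponent α i j) 1 := by
  simp only [mGen, mGenV, id_eq, X_pow_eq_monomial, mGenExponent, residualDegree,
    ← monomial_sum_one, monomial_mul, one_mul]

lemma mGen_dvd_mGen_iff (𝕜 : Type*) [Field 𝕜] (α : ℕ → ℕ → ℕ) (p q i j : ℕ) :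
    mGen 𝕜 α p q ∣ mGen 𝕜 α i j ↔ mGenExponent α p q ≤ mGenExponent α i j := by
  simp [mGen_eq_monomial, monomial_dvd_monomial]

namespace NormalForm

variable {s n : ℕ} {α : ℕ → ℕ → ℕ}

lemma residualDegree_pos (hNF : NormalForm s n α) {i t : ℕ} (hi : i ≤ s) (ht : 1 ≤ t)
    (htn : t ≤ n) : 0 < residualDegree α i t := by
  have hsub : ∑ r ∈ Icc 1 i, α r t ≤ ∑ r ∈ Icc 1 s, α r t :=
    sum_le_sum_of_subset (Icc_subset_Icc_right hi)
  have := hNF.2.2 t ht htn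
  unfold residualDegree
  omega

lemma eq_of_mGenExponent_le (hNF : NormalForm s n α) {p q i j : ℕ} (hp : p ≤ s) (hpq : p < q)
    (hqn : q ≤ n) (hi : i ≤ s) (hij : i < j) (hjn : j ≤ n) (hα : α i j ≠ 0)
    (hle : mGenExponent α p q ≤ mGenExponent α i j) : (p, q) = (i, j) := by
  have hq := hle q
  rw [mGenExponent_apply_self hpq] at hq
  have hpq_pos := hNF.residualDegree_pos hp (by omega) hqn
  by_cases hqi : q ≤ i
  · rw [mGenExponent_apply_of_mem_Icc (mem_Icc.2 ⟨by omega, hqi⟩) hij] at hq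
    have := residualDegree_lt_of_lt hpq hqi (hNF.1 q (by omega) (by omega))
      (hNF.residualDegree_pos hi (by omega) hqn)
    omega
  by_cases hqj : q = j
  · subst hqj
    rw [mGenExponent_apply_self hij] at hq
    rcases lt_trichotomy p i with hpi | rfl | hpi
    · have := residualDegree_lt_of_lt hpi le_rfl hα (hNF.residualDegree_pos hi (by omega) hjn)
      omega
    · rfl
    · have hnext := hle (i + 1)
      rw [mGenExponent_apply_of_mem_Icc (v := i + 1) (mem_Icc.2 ⟨by omega, hpi⟩) hpq,
        mGenExponent_apply_of_lt (lt_add_one i) (by omega)] at hnext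
      have := hNF.residualDegree_pos hp (t := i + 1) (by omega) (by omega)
      omega
  · rw [mGenExponent_apply_of_lt (by omega) hqj] at hq
    omega

end NormalForm

theorem stmt3_general (𝕜 : Type*) [Field 𝕜] (s n : ℕ) (α : ℕ → ℕ → ℕ) (hT : IsTable s n α)
    (hNF : NormalForm s n α)
    (i j : ℕ) (hi : i ≤ s) (hij : i < j) (hjn : j ≤ n) :
    α i j ≠ 0 ↔
      ¬ ∃ p q, p ≤ s ∧ p < q ∧ q ≤ n ∧ (p, q) ≠ (i, j) ∧ mGen 𝕜 α p q ∣ mGen 𝕜 α i j := by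
  constructor
  · rintro hα ⟨p, q, hp, hpq, hqn, hne, hdvd⟩
    exact hne (hNF.eq_of_mGenExponent_le hp hpq hqn hi hij hjn hα
      ((mGen_dvd_mGen_iff 𝕜 α p q i j).1 hdvd))
  · intro hmin hα
    obtain ⟨i, rfl⟩ : ∃ i', i = i' + 1 := by
      refine Nat.exists_eq_add_one.2 (Nat.pos_of_ne_zero ?_)
      rintro rfl
      have := hNF.residualDegree_pos hi (t := j) (by omega) hjn
      simp [residualDegree, hα] at this
    refine hmin ⟨i, j, by omega, by omega, hjn, by simp, ?_⟩
    rw [mGen_dvd_mGen_iff]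
    exact mGenExponent_le_succ (fun t ht => hT.2.1 (i + 1) t (by omega) hi (by omega)) hα

/-- for a proper table in normal form, `α_{i,j} ≠ 0` iff `m_{i,j}` is a
minimal generator of `K(T)` (not divisible by any other generator `m_{p,q}`). -/
theorem stmt3 (𝕜 : Type*) [Field 𝕜] (s n : ℕ) (α : ℕ → ℕ → ℕ) (hT : IsTable s n α)
    (hproper : KIdeal 𝕜 s n α ≠ ⊤) (hNF : NormalForm s n α)
    (i j : ℕ) (hi : i ≤ s) (hij : i < j) (hjn : j ≤ n) :
    α i j ≠ 0 ↔
      ¬ ∃ p q, p ≤ s ∧ p < q ∧ q ≤ n ∧ (p, q) ≠ (i, j) ∧ mGen 𝕜 α p q ∣ mGen 𝕜 α i j :=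
  stmt3_general 𝕜 s n α hT hNF i j hi hij hjn
end

section
/- Let T be a proper (s,n)-table in a normal form with s ≥ 1 colors. Then for every unconstrained variable index t with s+1 ≤ t ≤ n, there exists an i with 1 ≤ i ≤ s such that α_{i,t} ≠ 0 and such that the minimal generator m_{i,t} involves both x_1 and x_t; consequently, all of the variables x_1, ..., x_n lie in the same connected component of the simplicial complex S(K(T)). In other words, if T is a single proper table in normal form, then S(K(T)) is connected. -/
open MvPolynomial Finset

/-- Two variable indices are adjacent if they both lie in the support
`{1,…,i} ∪ {j}` of a common minimal generator `m_{i,j}` (i.e. with `α_{i,j} ≠ 0`). -/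
def TAdj (s n : ℕ) (α : ℕ → ℕ → ℕ) (a b : ℕ) : Prop :=
  ∃ i j, i ≤ s ∧ i < j ∧ j ≤ n ∧ α i j ≠ 0 ∧
    a ∈ insert j (Finset.Icc 1 i) ∧ b ∈ insert j (Finset.Icc 1 i)

/- Row `s` of a normal-form table has a nonzero entry in some unconstrained column: the
row equation for `k = s` together with the strict inequality in column `s` forces
`∑_{j > s} α_{s,j} > 0`, and the support of such an `m_{s,j}` contains `x_1, …, x_s`.
Every unconstrained column `t` has some `α_{i,t} ≠ 0`, and the support of `m_{i,t}` contains
`x_1` and `x_t`. Hence `x_1` is adjacent to every vertex. -/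

theorem TAdj.symm {s n : ℕ} {α : ℕ → ℕ → ℕ} {a b : ℕ} (h : TAdj s n α a b) :
    TAdj s n α b a := by
  obtain ⟨i, j, his, hij, hjn, hα, ha, hb⟩ := h
  exact ⟨i, j, his, hij, hjn, hα, hb, ha⟩

theorem NormalForm.exists_mem_support_one_of_unconstrained {s n : ℕ} {α : ℕ → ℕ → ℕ}
    (hNF : NormalForm s n α) (hs : 1 ≤ s) (t : ℕ) (hst : s + 1 ≤ t) (htn : t ≤ n) :
    ∃ i, 1 ≤ i ∧ i ≤ s ∧ α i t ≠ 0 ∧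
      1 ∈ insert t (Icc 1 i) ∧ t ∈ insert t (Icc 1 i) := by
  obtain ⟨i, hi, his, hα⟩ := hNF.2.1 hs t hst htn
  exact ⟨i, hi, his, hα, mem_insert_of_mem (mem_Icc.mpr ⟨le_rfl, hi⟩), mem_insert_self _ _⟩

theorem IsTable.exists_lastRow_ne_zero {s n : ℕ} {α : ℕ → ℕ → ℕ} (hT : IsTable s n α)
    (hNF : NormalForm s n α) (hs : 1 ≤ s) :
    ∃ j, s + 1 ≤ j ∧ j ≤ n ∧ α s j ≠ 0 := by
  have hrow := hT.2.2.2 s hs le_rfl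
  have hcol := hNF.2.2 s hs hT.1.le
  have hdiag : ∑ i ∈ Icc 1 s, α i s = ∑ i ∈ Icc 1 (s - 1), α i s + α s s := by
    obtain ⟨b, rfl⟩ : ∃ b, s = b + 1 := ⟨s - 1, by omega⟩
    simp [sum_Icc_succ_top (show 1 ≤ b + 1 by omega)]
  rw [if_neg (Nat.not_succ_le_self s), add_zero] at hrow
  have hpos : ∑ j ∈ Icc (s + 1) n, α s j ≠ 0 := by omega
  obtain ⟨j, hj, hα⟩ := exists_ne_zero_of_sum_ne_zero hpos
  exact ⟨j, (mem_Icc.mp hj).1, (mem_Icc.mp hj).2, hα⟩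

theorem IsTable.tAdj_one {s n : ℕ} {α : ℕ → ℕ → ℕ} (hT : IsTable s n α)
    (hNF : NormalForm s n α) (hs : 1 ≤ s) {a : ℕ} (ha : a ∈ Icc 1 n) :
    TAdj s n α a 1 := by
  obtain ⟨ha1, han⟩ := mem_Icc.mp ha
  by_cases has : a ≤ s
  · obtain ⟨j, hsj, hjn, hα⟩ := hT.exists_lastRow_ne_zero hNF hs
    exact ⟨s, j, le_rfl, by omega, hjn, hα, mem_insert_of_mem (mem_Icc.mpr ⟨ha1, has⟩),
      mem_insert_of_mem (mem_Icc.mpr ⟨le_rfl, hs⟩)⟩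
  · obtain ⟨i, -, his, hα, h1, hta⟩ :=
      hNF.exists_mem_support_one_of_unconstrained hs a (by omega) han
    exact ⟨i, a, his, by omega, han, hα, hta, h1⟩

theorem stmt7_general (s n : ℕ) (α : ℕ → ℕ → ℕ) (hT : IsTable s n α)
    (hNF : NormalForm s n α) (hs : 1 ≤ s) :
    (∀ t, s + 1 ≤ t → t ≤ n → ∃ i, 1 ≤ i ∧ i ≤ s ∧ α i t ≠ 0 ∧
      1 ∈ insert t (Finset.Icc 1 i) ∧ t ∈ insert t (Finset.Icc 1 i)) ∧
    (∀ a b, a ∈ Finset.Icc 1 n → b ∈ Finset.Icc 1 n →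
      Relation.ReflTransGen (TAdj s n α) a b) :=
  ⟨hNF.exists_mem_support_one_of_unconstrained hs, fun _ _ ha hb =>
    .tail (.single (hT.tAdj_one hNF hs ha)) (hT.tAdj_one hNF hs hb).symm⟩

/-- for a single proper table in normal form with `s ≥ 1`, every
unconstrained column `t` admits some `1 ≤ i ≤ s` with `α_{i,t} ≠ 0`, whose minimal
generator `m_{i,t}` involves both `x_1` and `x_t`; consequently all the variables
`x_1, …, x_n` lie in one connected component, i.e. `S(K(T))` is connected. -/
theorem stmt7 (𝕜 : Type*) [Field 𝕜] (s n : ℕ) (α : ℕ → ℕ → ℕ) (hT : IsTable s n α)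
    (hproper : KIdeal 𝕜 s n α ≠ ⊤) (hNF : NormalForm s n α) (hs : 1 ≤ s) :
    (∀ t, s + 1 ≤ t → t ≤ n → ∃ i, 1 ≤ i ∧ i ≤ s ∧ α i t ≠ 0 ∧
      1 ∈ insert t (Finset.Icc 1 i) ∧ t ∈ insert t (Finset.Icc 1 i)) ∧
    (∀ a b, a ∈ Finset.Icc 1 n → b ∈ Finset.Icc 1 n →
      Relation.ReflTransGen (TAdj s n α) a b) :=
  stmt7_general s n α hT hNF hs
end

section
/- Let T be a proper generalised table in a normal form with k connected components (i.e., a disjoint union of k single proper tables in normal form, where each (0,n)-table counts as n singleton tables). Then the weighted simplicial complex S(K(T)) has exactly k connected components. -/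
open MvPolynomial Finset

/-- A generalised table: a disjoint union of tables on disjoint sets of variables. -/
structure GenTable where
  num : ℕ
  s : Fin num → ℕ
  n : Fin num → ℕ
  α : Fin num → ℕ → ℕ → ℕ
  var : Fin num → ℕ → ℕ
  var_inj : ∀ c c' j j', 1 ≤ j → j ≤ n c → 1 ≤ j' → j' ≤ n c' →
    var c j = var c' j' → c = c' ∧ j = j'
  table : ∀ c, IsTable (s c) (n c) (α c)

/-- The ideal associated to a generalised table: the sum of the ideals of the
individual tables. -/
noncomputable def gKIdeal (𝕜 : Type*) [Field 𝕜] (T : GenTable) :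
    Ideal (MvPolynomial ℕ 𝕜) :=
  Ideal.span {m | ∃ c i j, i ≤ T.s c ∧ i < j ∧ j ≤ T.n c ∧
    m = mGenV 𝕜 (T.var c) (T.α c) i j}

/-- A generalised table is in normal form iff each individual table is. -/
def gNormal (T : GenTable) : Prop := ∀ c, NormalForm (T.s c) (T.n c) (T.α c)

/-- The vertex set of `S(K(T))` for a generalised table: the variables of `T`. -/
def gVertices (T : GenTable) : Set ℕ :=
  {v | ∃ c j, 1 ≤ j ∧ j ≤ T.n c ∧ v = T.var c j}

/-- Adjacency: two variables lie in the support of a common minimal generator. -/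
def gAdj (T : GenTable) (a b : ℕ) : Prop :=
  ∃ c i j, i ≤ T.s c ∧ i < j ∧ j ≤ T.n c ∧ T.α c i j ≠ 0 ∧
    (∃ p ∈ insert j (Finset.Icc 1 i), a = T.var c p) ∧
    (∃ q ∈ insert j (Finset.Icc 1 i), b = T.var c q)

/-!
Inside a table with `s ≥ 1` every column is joined to column `1`: a column `j > s` lies in the
support of some `m_{i,j}` with `α_{i,j} ≠ 0` (normal form), and the columns `1, …, s` all lie in
the support of `m_{s,j}` for a `j > s` with `α_{s,j} ≠ 0`, which exists because the strict
column inequality at column `s` forces the last row to be nonzero beyond the diagonal. A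
`(0,n)`-table has generators `m_{0,j} = x_j^{d_j}`, so its columns are isolated, and no
generator mixes the variables of different tables.
-/

theorem Relation.existsUnique_reflTransGen_of_partition {α ι : Type*} {r : α → α → Prop}
    (C : ι → Set α) (rep : ι → α)
    (closed : ∀ i x y, x ∈ C i → r x y → y ∈ C i)
    (disjoint : ∀ i j x, x ∈ C i → x ∈ C j → i = j)
    (rep_mem : ∀ i, rep i ∈ C i)
    (reach : ∀ i x, x ∈ C i → Relation.ReflTransGen r (rep i) x)
    {i : ι} {v : α} (hv : v ∈ C i) :
    ∃! i, Relation.ReflTransGen r (rep i) v := by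
  have mem_of_reach : ∀ j w, Relation.ReflTransGen r (rep j) w → w ∈ C j := by
    intro j w h
    induction h with
    | refl => exact rep_mem j
    | tail _ hxy ih => exact closed j _ _ ih hxy
  exact ⟨i, reach i v hv, fun j hj => disjoint j i v (mem_of_reach j v hj) hv⟩

theorem IsTable.exists_last_row_ne_zero {s n : ℕ} {α : ℕ → ℕ → ℕ}
    (hT : IsTable s n α) (hN : NormalForm s n α) (hs : 1 ≤ s) :
    ∃ j, s < j ∧ j ≤ n ∧ α s j ≠ 0 := by
  have hrow := hT.2.2.2 s hs le_rfl
  rw [if_neg (by omega)] at hrow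
  have hcol := hN.2.2 s hs (by have := hT.1; omega)
  have hmono : ∑ i ∈ Icc 1 (s - 1), α i s ≤ ∑ i ∈ Icc 1 s, α i s :=
    sum_le_sum_of_subset (Icc_subset_Icc le_rfl (Nat.sub_le s 1))
  obtain ⟨j, hj, hne⟩ :=
    exists_ne_zero_of_sum_ne_zero (s := Icc (s + 1) n) (f := α s) (by omega)
  rw [mem_Icc] at hj
  exact ⟨j, by omega, hj.2, hne⟩

namespace GenTable

variable (T : GenTable)

/-- The connected components of `S(K(T))`: one for each table with `s ≥ 1`, and one for each
column of a table with `s = 0`. -/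
abbrev ComponentIndex : Type :=
  (c : Fin T.num) × Fin (if T.s c = 0 then T.n c else 1)

def component (k : T.ComponentIndex) : Set ℕ :=
  {x | ∃ p, 1 ≤ p ∧ p ≤ T.n k.1 ∧ x = T.var k.1 p ∧ (T.s k.1 = 0 → p = k.2 + 1)}

def repCol (k : T.ComponentIndex) : ℕ :=
  if T.s k.1 = 0 then k.2 + 1 else 1

def rep (k : T.ComponentIndex) : ℕ :=
  T.var k.1 (T.repCol k)

variable {T}

theorem bounds_of_mem_support {c : Fin T.num} {i j p : ℕ} (hi : i ≤ T.s c) (hij : i < j)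
    (hj : j ≤ T.n c) (hp : p ∈ insert j (Icc 1 i)) : 1 ≤ p ∧ p ≤ T.n c := by
  have := (T.table c).1
  rw [mem_insert, mem_Icc] at hp
  omega

theorem repCol_bounds (k : T.ComponentIndex) : 1 ≤ T.repCol k ∧ T.repCol k ≤ T.n k.1 := by
  have hk := k.2.isLt
  have := (T.table k.1).1
  unfold repCol
  split_ifs at hk ⊢ <;> omega

theorem rep_mem_component (k : T.ComponentIndex) : T.rep k ∈ T.component k :=
  ⟨T.repCol k, (repCol_bounds k).1, (repCol_bounds k).2, rfl,
    fun hs => by simp [repCol, hs]⟩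

theorem rep_mem_gVertices (k : T.ComponentIndex) : T.rep k ∈ gVertices T :=
  ⟨k.1, T.repCol k, (repCol_bounds k).1, (repCol_bounds k).2, rfl⟩

theorem exists_mem_component {v : ℕ} (hv : v ∈ gVertices T) : ∃ k, v ∈ T.component k := by
  obtain ⟨c, j, hj1, hjn, rfl⟩ := hv
  have := (T.table c).1
  refine ⟨⟨c, ⟨if T.s c = 0 then j - 1 else 0, by split_ifs <;> omega⟩⟩,
    j, hj1, hjn, rfl, fun hs => ?_⟩
  simp only [hs, ↓reduceIte]
  omega

theorem eq_of_mem_component {k k' : T.ComponentIndex} {x : ℕ}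
    (hx : x ∈ T.component k) (hx' : x ∈ T.component k') : k = k' := by
  rcases k with ⟨c, f⟩
  rcases k' with ⟨c', f'⟩
  dsimp only [component] at hx hx'
  obtain ⟨p, hp1, hpn, rfl, hps⟩ := hx
  obtain ⟨p', hp1', hpn', hpp', hps'⟩ := hx'
  obtain ⟨rfl, rfl⟩ := T.var_inj c c' p p' hp1 hpn hp1' hpn' hpp'
  suffices (f : ℕ) = f' by rw [Fin.ext this]
  by_cases hs : T.s c = 0
  · have := hps hs; have := hps' hs; omega
  · have hf := f.isLt
    have hf' := f'.isLt
    simp only [hs, ↓reduceIte] at hf hf'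
    omega

theorem component_closed_gAdj {k : T.ComponentIndex} {x y : ℕ}
    (hx : x ∈ T.component k) (hxy : gAdj T x y) : y ∈ T.component k := by
  obtain ⟨c, i, j, hi, hij, hj, -, ⟨p, hp, rfl⟩, ⟨q, hq, rfl⟩⟩ := hxy
  obtain ⟨p₀, hp₀1, hp₀n, hpp₀, hp₀s⟩ := hx
  obtain ⟨hp1, hpn⟩ := bounds_of_mem_support hi hij hj hp
  obtain ⟨hq1, hqn⟩ := bounds_of_mem_support hi hij hj hq
  obtain ⟨rfl, rfl⟩ := T.var_inj c k.1 p p₀ hp1 hpn hp₀1 hp₀n hpp₀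
  refine ⟨q, hq1, hqn, rfl, fun hs => ?_⟩
  rw [mem_insert, mem_Icc] at hp hq
  have := hp₀s hs
  omega

theorem gAdj_var_one (hNF : gNormal T) {c : Fin T.num} (hs : T.s c ≠ 0) {j : ℕ}
    (hj1 : 1 ≤ j) (hjn : j ≤ T.n c) : gAdj T (T.var c 1) (T.var c j) := by
  by_cases hjs : j ≤ T.s c
  · obtain ⟨j₀, hsj₀, hj₀n, hne⟩ := (T.table c).exists_last_row_ne_zero (hNF c) (by omega)
    refine ⟨c, T.s c, j₀, le_rfl, hsj₀, hj₀n, hne, ⟨1, ?_, rfl⟩, ⟨j, ?_, rfl⟩⟩ <;>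
      (rw [mem_insert, mem_Icc]; omega)
  · obtain ⟨i, hi1, his, hne⟩ := (hNF c).2.1 (by omega) j (by omega) hjn
    exact ⟨c, i, j, his, by omega, hjn, hne, ⟨1, by rw [mem_insert, mem_Icc]; omega, rfl⟩,
      ⟨j, mem_insert_self _ _, rfl⟩⟩

theorem reflTransGen_rep_of_mem_component (hNF : gNormal T) {k : T.ComponentIndex} {x : ℕ}
    (hx : x ∈ T.component k) : Relation.ReflTransGen (gAdj T) (T.rep k) x := by
  obtain ⟨p, hp1, hpn, rfl, hps⟩ := hx
  by_cases hs : T.s k.1 = 0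
  · simp [rep, repCol, hs, hps hs, Relation.ReflTransGen.refl]
  · simpa [rep, repCol, hs] using Relation.ReflTransGen.single (gAdj_var_one hNF hs hp1 hpn)

end GenTable

theorem stmt8_general (T : GenTable) (hNF : gNormal T) :
    ∃ rep : Fin (∑ c, if T.s c = 0 then T.n c else 1) → ℕ,
      (∀ m, rep m ∈ gVertices T) ∧
      ∀ v ∈ gVertices T, ∃! m, Relation.ReflTransGen (gAdj T) (rep m) v := by
  let e : T.ComponentIndex ≃ Fin (∑ c, if T.s c = 0 then T.n c else 1) :=
    Fintype.equivFinOfCardEq (by simp)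
  refine ⟨fun m => T.rep (e.symm m), fun m => GenTable.rep_mem_gVertices _, fun v hv => ?_⟩
  obtain ⟨k, hk⟩ := GenTable.exists_mem_component hv
  refine (e.existsUnique_congr_left
    (p := fun k => Relation.ReflTransGen (gAdj T) (T.rep k) v)).mp ?_
  exact Relation.existsUnique_reflTransGen_of_partition T.component T.rep
    (fun _ _ _ => GenTable.component_closed_gAdj) (fun _ _ _ => GenTable.eq_of_mem_component)
    GenTable.rep_mem_component
    (fun _ _ => GenTable.reflTransGen_rep_of_mem_component hNF) hk

/-- a proper generalised table in normal form with `k` connected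
components (each `(0,n)`-table counting `n` times) yields a simplicial complex
`S(K(T))` with exactly `k` connected components: there are representatives
`rep : Fin k → ℕ` such that every vertex is connected to exactly one of them. -/
theorem stmt8 (𝕜 : Type*) [Field 𝕜] (T : GenTable)
    (hproper : gKIdeal 𝕜 T ≠ ⊤) (hNF : gNormal T) :
    ∃ rep : Fin (∑ c, if T.s c = 0 then T.n c else 1) → ℕ,
      (∀ m, rep m ∈ gVertices T) ∧
      ∀ v ∈ gVertices T, ∃! m, Relation.ReflTransGen (gAdj T) (rep m) v :=
  stmt8_general T hNF
end

section
/- Let K be a table ideal coming from a single proper table T in a normal form with connected S(K) of dimension s ≥ 1, and suppose two distinct variables x_i and x_j both belong to F(K) (the set of possible first variables) with the corresponding pure-power exponents d_i = d_j. Then T would split into a disjoint union (S(K) disconnected), a contradiction; hence the pure-power exponents of distinct elements of F(K) are pairwise distinct, and the unique variable in F(K) with the smallest pure-power exponent is the first constrained variable of any table in normal form representing K. -/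
open MvPolynomial Finset

/-- `F(K)`: the set of variables `x_t` such that all minimal generators of `K(T)`
other than the pure powers have the same `x_t`-exponent. -/
def FSet (𝕜 : Type*) [Field 𝕜] (s n : ℕ) (α : ℕ → ℕ → ℕ) : Set ℕ :=
  {t | 1 ≤ t ∧ t ≤ n ∧ ∃ e : ℕ, ∀ i j, 1 ≤ i → i ≤ s → i < j → j ≤ n → α i j ≠ 0 →
    MvPolynomial.degreeOf t (mGen 𝕜 α i j) = e}

/-! If `x_t ∈ F(K)` with `t ≥ 2`, connectivity puts `x_t` into the support of some mixed
generator, where its exponent is positive by the strict column inequalities; so the common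
exponent is positive, `x_t` divides every mixed generator `m_{i,j}`, and all of them share the
partial column sum `α_{1,t} + ⋯ + α_{i,t}`. Comparing these sums shows that for `k < t` the
column `k` is empty above the diagonal and row `k` is concentrated in column `k + 1`
(an entry `α_{k,t}` with `k + 1 < t` would isolate `x_{k+1}`). The row equation then reads
`d_k = α_{k,k+1} + α_{k+1,k+1} ≤ ∑_r α_{r,k+1} < d_{k+1}`, so `d` increases strictly on
`1, …, t`, hence along `F(K)`, which contains `1`. -/

lemma eq_of_reflTransGen_of_forall_rel_eq {β : Type*} {r : β → β → Prop} {a b : β}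
    (h : ∀ c, r a c → c = a) (hab : Relation.ReflTransGen r a b) : b = a := by
  induction hab with
  | refl => rfl
  | tail _ hbc ih => exact h _ (ih ▸ hbc)

lemma eq_zero_of_sum_Icc_eq {f : ℕ → ℕ} {a b r : ℕ} (har : a < r) (hrb : r ≤ b)
    (h : ∑ x ∈ Icc 1 a, f x = ∑ x ∈ Icc 1 b, f x) : f r = 0 := by
  have hr : r ∉ Icc 1 a := by simp only [mem_Icc]; omega
  have hrb' : r ∈ Icc 1 b := mem_Icc.2 ⟨by omega, hrb⟩
  have hle := sum_le_sum_of_subset (f := f)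
    (insert_subset hrb' (Icc_subset_Icc_right (har.le.trans hrb)))
  rw [sum_insert hr] at hle
  omega

lemma degreeOf_mGen (𝕜 : Type*) [Field 𝕜] (α : ℕ → ℕ → ℕ) {i j : ℕ} (hij : i < j) (t : ℕ) :
    degreeOf t (mGen 𝕜 α i j) =
      if t ∈ insert j (Icc 1 i) then α 0 t - ∑ r ∈ Icc 1 i, α r t else 0 := by
  have hj : j ∉ Icc 1 i := by simp only [mem_Icc]; omega
  have hprod : mGen 𝕜 α i j = ∏ u ∈ insert j (Icc 1 i), X u ^ (α 0 u - ∑ r ∈ Icc 1 i, α r u) := by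
    rw [prod_insert hj, mul_comm]
    rfl
  simp only [hprod, X_pow_eq_monomial, ← monomial_sum_one]
  rw [degreeOf_monomial_eq _ _ one_ne_zero, Finsupp.finsetSum_apply]
  simp only [Finsupp.single_apply, sum_ite_eq']

/-- The generators `m_{i,j}` that are not pure powers, i.e. those quantified over in `FSet`. -/
def IsMixedGen (s n : ℕ) (α : ℕ → ℕ → ℕ) (i j : ℕ) : Prop :=
  1 ≤ i ∧ i ≤ s ∧ i < j ∧ j ≤ n ∧ α i j ≠ 0

def TConnected (s n : ℕ) (α : ℕ → ℕ → ℕ) : Prop :=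
  ∀ a b, a ∈ Icc 1 n → b ∈ Icc 1 n → Relation.ReflTransGen (TAdj s n α) a b

section

variable {𝕜 : Type*} [Field 𝕜] {s n : ℕ} {α : ℕ → ℕ → ℕ}

lemma mem_FSet_iff {t : ℕ} : t ∈ FSet 𝕜 s n α ↔ 1 ≤ t ∧ t ≤ n ∧
    ∃ e, ∀ i j, IsMixedGen s n α i j → degreeOf t (mGen 𝕜 α i j) = e := by
  simp only [FSet, IsMixedGen, Set.mem_ofPred_eq, and_imp]

lemma sum_Icc_lt_of_normalForm (hNF : NormalForm s n α) {i t : ℕ} (hi : i ≤ s) (ht1 : 1 ≤ t)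
    (htn : t ≤ n) : ∑ r ∈ Icc 1 i, α r t < α 0 t :=
  (sum_le_sum_of_subset (Icc_subset_Icc_right hi)).trans_lt (hNF.2.2 t ht1 htn)

lemma TConnected.exists_isMixedGen_mem (hConn : TConnected s n α) {a : ℕ} (ha : 1 < a)
    (han : a ≤ n) : ∃ i j, IsMixedGen s n α i j ∧ a ∈ insert j (Icc 1 i) := by
  by_contra! h
  have hiso : ∀ c, TAdj s n α a c → c = a := by
    rintro c ⟨i, j, his, hij, hjn, hα, ha, hc⟩
    rcases Nat.eq_zero_or_pos i with rfl | hi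
    · simp only [mem_insert, mem_Icc] at ha hc
      omega
    · exact absurd ha (h i j ⟨hi, his, hij, hjn, hα⟩)
  have := eq_of_reflTransGen_of_forall_rel_eq hiso
    (hConn a 1 (mem_Icc.2 ⟨by omega, han⟩) (mem_Icc.2 ⟨le_rfl, by omega⟩))
  omega

lemma one_mem_FSet (hT : IsTable s n α) : 1 ∈ FSet 𝕜 s n α := by
  refine mem_FSet_iff.2 ⟨le_rfl, by have := hT.1; omega, α 0 1 - α 1 1, ?_⟩
  rintro i j ⟨hi, his, hij, -, -⟩
  have hcol : ∑ r ∈ Icc 1 i, α r 1 = α 1 1 := by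
    refine sum_eq_single_of_mem 1 (mem_Icc.2 ⟨by omega, by omega⟩) fun r hr hne => ?_
    simp only [mem_Icc] at hr
    exact hT.2.1 r 1 hr.1 (hr.2.trans his) (by omega)
  rw [degreeOf_mGen 𝕜 α hij, if_pos (by simp only [mem_insert, mem_Icc]; omega), hcol]

variable {t : ℕ}

lemma mem_insert_Icc_of_mem_FSet (hNF : NormalForm s n α) (hConn : TConnected s n α)
    (ht : t ∈ FSet 𝕜 s n α) (ht2 : 1 < t) {i j : ℕ} (hij : IsMixedGen s n α i j) :
    t ∈ insert j (Icc 1 i) := by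
  obtain ⟨ht1, htn, e, he⟩ := mem_FSet_iff.1 ht
  obtain ⟨i₀, j₀, hij₀, hmem₀⟩ := hConn.exists_isMixedGen_mem ht2 htn
  have he_pos : 0 < e := by
    rw [← he i₀ j₀ hij₀, degreeOf_mGen 𝕜 α hij₀.2.2.1, if_pos hmem₀]
    exact Nat.sub_pos_of_lt (sum_Icc_lt_of_normalForm hNF hij₀.2.1 ht1 htn)
  by_contra hmem
  have := he i j hij
  rw [degreeOf_mGen 𝕜 α hij.2.2.1, if_neg hmem] at this
  omega

lemma apply_eq_zero_of_mem_FSet (hNF : NormalForm s n α) (hConn : TConnected s n α)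
    (ht : t ∈ FSet 𝕜 s n α) (ht2 : 1 < t) {i₁ j₁ i₂ j₂ r : ℕ} (h₁ : IsMixedGen s n α i₁ j₁)
    (h₂ : IsMixedGen s n α i₂ j₂) (hr₁ : i₁ < r) (hr₂ : r ≤ i₂) : α r t = 0 := by
  obtain ⟨ht1, htn, e, he⟩ := mem_FSet_iff.1 ht
  have hsum : ∀ i j, IsMixedGen s n α i j → ∑ r ∈ Icc 1 i, α r t = α 0 t - e := by
    intro i j hij
    have hlt := sum_Icc_lt_of_normalForm hNF hij.2.1 ht1 htn
    have := he i j hij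
    rw [degreeOf_mGen 𝕜 α hij.2.2.1, if_pos (mem_insert_Icc_of_mem_FSet hNF hConn ht ht2 hij)]
      at this
    omega
  exact eq_zero_of_sum_Icc_eq (f := fun r => α r t) hr₁ hr₂ ((hsum _ _ h₁).trans (hsum _ _ h₂).symm)

lemma apply_eq_zero_of_mem_FSet_of_ne (hNF : NormalForm s n α) (hConn : TConnected s n α)
    (ht : t ∈ FSet 𝕜 s n α) (ht2 : 1 < t) {i j : ℕ} (hi : 1 ≤ i) (his : i ≤ s) (hij : i < j)
    (hjn : j ≤ n) (hit : i < t) (hjt : j ≠ t) : α i j = 0 := by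
  by_contra hα
  have := mem_insert_Icc_of_mem_FSet hNF hConn ht ht2 ⟨hi, his, hij, hjn, hα⟩
  simp only [mem_insert, mem_Icc] at this
  omega

lemma le_add_one_of_mem_FSet (hT : IsTable s n α) (hNF : NormalForm s n α) (hs : 1 ≤ s)
    (hConn : TConnected s n α) (ht : t ∈ FSet 𝕜 s n α) (ht2 : 1 < t) : t ≤ s + 1 := by
  obtain ⟨i, hi, his, hα⟩ := hNF.2.1 hs (s + 1) le_rfl hT.1
  have := mem_insert_Icc_of_mem_FSet hNF hConn ht ht2 ⟨hi, his, by omega, hT.1, hα⟩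
  simp only [mem_insert, mem_Icc] at this
  omega

lemma apply_eq_zero_of_add_one_lt_of_mem_FSet (hT : IsTable s n α) (hNF : NormalForm s n α)
    (hs : 1 ≤ s) (hConn : TConnected s n α) (ht : t ∈ FSet 𝕜 s n α) {k : ℕ} (hk : 1 ≤ k)
    (hkt : k + 1 < t) : α k t = 0 := by
  by_contra hα
  have ht2 : 1 < t := by omega
  have hmix : IsMixedGen s n α k t :=
    ⟨hk, by have := le_add_one_of_mem_FSet hT hNF hs hConn ht ht2; omega, by omega,
      (mem_FSet_iff.1 ht).2.1, hα⟩
  have honly : ∀ i j, IsMixedGen s n α i j → j = t ∧ i = k := by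
    intro i j hij
    have hjt : j = t := by
      by_contra hjt
      have hti : t ≤ i := by
        have := mem_insert_Icc_of_mem_FSet hNF hConn ht ht2 hij
        simp only [mem_insert, mem_Icc] at this
        omega
      exact hNF.1 t (by omega) (hti.trans hij.2.1)
        (apply_eq_zero_of_mem_FSet hNF hConn ht ht2 hmix hij (by omega) hti)
    subst hjt
    refine ⟨rfl, le_antisymm (not_lt.1 fun hki => hij.2.2.2.2 ?_) (not_lt.1 fun hik => hα ?_)⟩
    · exact apply_eq_zero_of_mem_FSet hNF hConn ht ht2 hmix hij hki le_rfl
    · exact apply_eq_zero_of_mem_FSet hNF hConn ht ht2 hij hmix hik le_rfl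
  -- otherwise `m_{k,t}` is the only mixed generator, and it leaves `x_{k+1}` isolated
  obtain ⟨i, j, hij, hmem⟩ :=
    hConn.exists_isMixedGen_mem (a := k + 1) (by omega) (by have := hmix.2.2.2.1; omega)
  obtain ⟨rfl, rfl⟩ := honly i j hij
  simp only [mem_insert, mem_Icc] at hmem
  omega

lemma apply_zero_lt_apply_zero_add_one_of_mem_FSet (hT : IsTable s n α)
    (hNF : NormalForm s n α) (hs : 1 ≤ s) (hConn : TConnected s n α) (ht : t ∈ FSet 𝕜 s n α)
    {k : ℕ} (hk : 1 ≤ k) (hkt : k < t) : α 0 k < α 0 (k + 1) := by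
  have ht2 : 1 < t := by omega
  have htn : t ≤ n := (mem_FSet_iff.1 ht).2.1
  have hks : k ≤ s := by have := le_add_one_of_mem_FSet hT hNF hs hConn ht ht2; omega
  have hcol : ∑ i ∈ Icc 1 (k - 1), α i k = 0 := sum_eq_zero fun i hi => by
    simp only [mem_Icc] at hi
    exact apply_eq_zero_of_mem_FSet_of_ne hNF hConn ht ht2 hi.1 (by omega) (by omega) (by omega)
      (by omega) (by omega)
  have hrow : ∑ j ∈ Icc (k + 1) n, α k j = α k (k + 1) := by
    refine sum_eq_single_of_mem (k + 1) (mem_Icc.2 ⟨by omega, by omega⟩) fun j hj hne => ?_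
    simp only [mem_Icc] at hj
    rcases eq_or_ne j t with rfl | hjt
    · exact apply_eq_zero_of_add_one_lt_of_mem_FSet hT hNF hs hConn ht hk (by omega)
    · exact apply_eq_zero_of_mem_FSet_of_ne hNF hConn ht ht2 hk hks (by omega) hj.2 hkt hjt
  have hdiag : α k (k + 1) + (if k + 1 ≤ s then α (k + 1) (k + 1) else 0) ≤
      ∑ r ∈ Icc 1 s, α r (k + 1) := by
    split_ifs with h
    · exact add_le_sum (f := fun r => α r (k + 1)) (fun _ _ => Nat.zero_le _)
        (mem_Icc.2 ⟨hk, hks⟩) (mem_Icc.2 ⟨by omega, h⟩) k.succ_ne_self.symm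
    · simpa using single_le_sum (f := fun r => α r (k + 1)) (fun _ _ => Nat.zero_le _)
        (mem_Icc.2 ⟨hk, hks⟩)
  rw [hT.2.2.2 k hk hks, hcol, hrow, zero_add]
  exact hdiag.trans_lt (hNF.2.2 (k + 1) (by omega) (by omega))

lemma strictMonoOn_FSet (hT : IsTable s n α) (hNF : NormalForm s n α) (hs : 1 ≤ s)
    (hConn : TConnected s n α) : StrictMonoOn (α 0) (FSet 𝕜 s n α) := by
  intro k hk t ht hkt
  have hmono : StrictMonoOn (α 0) (Set.Icc 1 t) :=
    strictMonoOn_of_lt_add_one Set.ordConnected_Icc fun a _ ha ha1 =>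
      apply_zero_lt_apply_zero_add_one_of_mem_FSet hT hNF hs hConn ht ha.1 ha1.2
  exact hmono ⟨hk.1, hkt.le⟩ ⟨ht.1, le_rfl⟩ hkt

end

theorem stmt11_general (𝕜 : Type*) [Field 𝕜] (s n : ℕ) (α : ℕ → ℕ → ℕ) (hT : IsTable s n α)
    (hNF : NormalForm s n α) (hs : 1 ≤ s)
    (hConn : ∀ a b, a ∈ Finset.Icc 1 n → b ∈ Finset.Icc 1 n →
      Relation.ReflTransGen (TAdj s n α) a b) :
    (∀ t₁ ∈ FSet 𝕜 s n α, ∀ t₂ ∈ FSet 𝕜 s n α, t₁ ≠ t₂ → α 0 t₁ ≠ α 0 t₂) ∧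
    1 ∈ FSet 𝕜 s n α ∧
    (∀ t ∈ FSet 𝕜 s n α, t ≠ 1 → α 0 1 < α 0 t) := by
  have hmono : StrictMonoOn (α 0) (FSet 𝕜 s n α) := strictMonoOn_FSet hT hNF hs hConn
  have h1 : 1 ∈ FSet 𝕜 s n α := one_mem_FSet hT
  refine ⟨fun t₁ h₁ t₂ h₂ hne heq => hne (hmono.injOn h₁ h₂ heq), h1, fun t ht ht1 => ?_⟩
  exact hmono h1 ht (ht.1.lt_of_ne' ht1)

/-- for a table ideal from a single proper table in normal form with
`S(K)` connected of dimension `s ≥ 1`, the pure-power exponents of distinct elements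
of `F(K)` are pairwise distinct, and the unique element of `F(K)` with the smallest
pure-power exponent is the first constrained variable (here `x_1`). -/
theorem stmt11 (𝕜 : Type*) [Field 𝕜] (s n : ℕ) (α : ℕ → ℕ → ℕ) (hT : IsTable s n α)
    (hproper : KIdeal 𝕜 s n α ≠ ⊤) (hNF : NormalForm s n α) (hs : 1 ≤ s)
    (hConn : ∀ a b, a ∈ Finset.Icc 1 n → b ∈ Finset.Icc 1 n →
      Relation.ReflTransGen (TAdj s n α) a b) :
    (∀ t₁ ∈ FSet 𝕜 s n α, ∀ t₂ ∈ FSet 𝕜 s n α, t₁ ≠ t₂ → α 0 t₁ ≠ α 0 t₂) ∧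
    1 ∈ FSet 𝕜 s n α ∧
    (∀ t ∈ FSet 𝕜 s n α, t ≠ 1 → α 0 1 < α 0 t) :=
  stmt11_general 𝕜 s n α hT hNF hs hConn
end

section
/- Let T be a single (s,n)-table in normal form with the default order of constrained variables x_1,...,x_s, let K = K(T), and let J = K : (x_1^{d_1−α_{1,1}}) be the ideal quotient. Then J is generated by x_1^{α_{1,1}} together with the generators of a table ideal J' in the variables x_2,...,x_n, where J' = K(T') for the table T' obtained from T by deleting the first column and first row and replacing the new top row entries d_j by d_j − α_{1,j} (for j = 2,...,n). -/
open MvPolynomial Finset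

/-!
`K(T)` is a monomial ideal, so its colon by `x_1^c`, `c = d_1 - α_{1,1}`, is the monomial ideal
of the exponents `m` with `e ≤ m + c·e_1` for some generator exponent `e`. Column 1 of `T`
vanishes below row 1, hence every `m_{i,j}` with `i ≥ 1` is `x_1^c` times the generator
`m'_{i-1,j-1}` of `K(T')`, and `m_{0,1} = x_1^c · x_1^{α_{1,1}}`. The remaining generators
`m_{0,j} = x_j^{d_j}`, `j ≥ 2`, do not involve `x_1` and are multiples of
`m'_{0,j-1} = x_j^{d_j - α_{1,j}}`, so they contribute nothing new.
-/

namespace MvPolynomial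

variable {σ R : Type*} [CommSemiring R]

theorem support_mul_monomial_one (p : MvPolynomial σ R) (u : σ →₀ ℕ) :
    (p * monomial u 1).support = p.support.map (addRightEmbedding u) :=
  AddMonoidAlgebra.support_coeff_mul_single p 1 (by simp) u

theorem span_monomial_image_colon_eq {S S' : Set (σ →₀ ℕ)} (u : σ →₀ ℕ)
    (h : ∀ m, (∃ e ∈ S, e ≤ m + u) ↔ ∃ e ∈ S', e ≤ m) :
    (Ideal.span ((fun e => monomial e (1 : R)) '' S)).colon
        (Ideal.span {monomial u (1 : R)}) =
      Ideal.span ((fun e => monomial e (1 : R)) '' S') := by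
  ext p
  simp only [Ideal.mem_colon_span_singleton, mem_ideal_span_monomial_image,
    support_mul_monomial_one, Finset.forall_mem_map, addRightEmbedding_apply, h]

end MvPolynomial

namespace Finset

variable {M : Type*} [AddCommMonoid M]

theorem sum_Icc_add_one_add_one (f : ℕ → M) (a b : ℕ) :
    ∑ t ∈ Icc (a + 1) (b + 1), f t = ∑ t ∈ Icc a b, f (t + 1) := by
  rw [← map_add_right_Icc, sum_map]
  rfl

theorem sum_Icc_eq_add_sum_Icc_add_one (f : ℕ → M) {a b : ℕ} (h : a ≤ b) :
    ∑ t ∈ Icc a b, f t = f a + ∑ t ∈ Icc (a + 1) b, f t := by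
  rw [← add_sum_Ioc_eq_sum_Icc h, Icc_add_one_left_eq_Ioc]

end Finset

/-- The table `T'`. -/
def dropFirstRowCol (α : ℕ → ℕ → ℕ) (i j : ℕ) : ℕ :=
  if i = 0 then α 0 (j + 1) - α 1 (j + 1) else α (i + 1) (j + 1)

/-- The exponent `d_t - α_{1,t} - ⋯ - α_{i,t}` of `x_t` in the generators `m_{i,j}`. -/
def colExp (α : ℕ → ℕ → ℕ) (i t : ℕ) : ℕ :=
  α 0 t - ∑ r ∈ Icc 1 i, α r t

noncomputable def mExp (v : ℕ → ℕ) (α : ℕ → ℕ → ℕ) (i j : ℕ) : ℕ →₀ ℕ :=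
  ∑ t ∈ Icc 1 i, Finsupp.single (v t) (colExp α i t) + Finsupp.single (v j) (colExp α i j)

def mExpSet (v : ℕ → ℕ) (α : ℕ → ℕ → ℕ) (s n : ℕ) : Set (ℕ →₀ ℕ) :=
  {e | ∃ i j, i ≤ s ∧ i < j ∧ j ≤ n ∧ e = mExp v α i j}

section

variable (α : ℕ → ℕ → ℕ)

theorem sum_dropFirstRowCol_rows {a : ℕ} (ha : 1 ≤ a) (b j : ℕ) :
    ∑ i ∈ Icc a b, dropFirstRowCol α i j = ∑ i ∈ Icc (a + 1) (b + 1), α i (j + 1) := by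
  rw [sum_Icc_add_one_add_one]
  exact sum_congr rfl fun i hi => if_neg (by simp only [mem_Icc] at hi; omega)

theorem sum_dropFirstRowCol_cols {i : ℕ} (hi : i ≠ 0) (a b : ℕ) :
    ∑ j ∈ Icc a b, dropFirstRowCol α i j = ∑ j ∈ Icc (a + 1) (b + 1), α (i + 1) j := by
  rw [sum_Icc_add_one_add_one]
  exact sum_congr rfl fun j _ => if_neg hi

theorem isTable_dropFirstRowCol {s n : ℕ} (hT : IsTable s n α) (hs : 1 ≤ s) :
    IsTable (s - 1) (n - 1) (dropFirstRowCol α) := by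
  obtain ⟨hsn, hzero, hcol, hrow⟩ := hT
  refine ⟨by omega, fun i j hi his hji => ?_, fun j hj hjn => ?_, fun k hk hks => ?_⟩
  · rw [dropFirstRowCol, if_neg (by omega)]
    exact hzero (i + 1) (j + 1) (by omega) (by omega) (by omega)
  · have h := hcol (j + 1) (by omega) (by omega)
    rw [sum_Icc_eq_add_sum_Icc_add_one _ hs] at h
    rw [sum_dropFirstRowCol_rows α le_rfl, Nat.sub_add_cancel hs, dropFirstRowCol,
      if_pos rfl]
    omega
  · have h := hrow (k + 1) (by omega) (by omega)
    rw [Nat.add_sub_cancel, sum_Icc_eq_add_sum_Icc_add_one _ hk] at h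
    have hlast : (if k + 1 ≤ s - 1 then dropFirstRowCol α (k + 1) (k + 1) else 0) =
        if k + 1 + 1 ≤ s then α (k + 1 + 1) (k + 1 + 1) else 0 := by
      split_ifs <;> first | omega | simp [dropFirstRowCol]
    rw [sum_dropFirstRowCol_rows α le_rfl, Nat.sub_add_cancel hk,
      sum_dropFirstRowCol_cols α (by omega), Nat.sub_add_cancel (by omega : 1 ≤ n), hlast,
      dropFirstRowCol, if_pos rfl]
    omega

theorem colExp_dropFirstRowCol (i t : ℕ) :
    colExp (dropFirstRowCol α) i t = colExp α (i + 1) (t + 1) := by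
  rw [colExp, colExp, sum_dropFirstRowCol_rows α le_rfl,
    sum_Icc_eq_add_sum_Icc_add_one _ (by omega : 1 ≤ i + 1), dropFirstRowCol, if_pos rfl]
  omega

theorem mExp_zero (v : ℕ → ℕ) (j : ℕ) : mExp v α 0 j = Finsupp.single (v j) (α 0 j) := by
  simp [mExp, colExp]

theorem mExp_add_one_add_one {i : ℕ} (hz : ∀ r ∈ Icc 2 (i + 1), α r 1 = 0) (j : ℕ) :
    mExp id α (i + 1) (j + 1) =
      mExp (· + 1) (dropFirstRowCol α) i j + Finsupp.single 1 (α 0 1 - α 1 1) := by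
  have h1 : colExp α (i + 1) 1 = α 0 1 - α 1 1 := by
    rw [colExp, sum_Icc_eq_add_sum_Icc_add_one _ (by omega : 1 ≤ i + 1), sum_eq_zero hz,
      add_zero]
  simp only [mExp, colExp_dropFirstRowCol, id]
  rw [sum_Icc_eq_add_sum_Icc_add_one _ (by omega : 1 ≤ i + 1), sum_Icc_add_one_add_one, h1]
  abel

end

theorem mGenV_eq_monomial (𝕜 : Type*) [Field 𝕜] (v : ℕ → ℕ) (α : ℕ → ℕ → ℕ) (i j : ℕ) :
    mGenV 𝕜 v α i j = monomial (mExp v α i j) 1 := by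
  rw [mExp, ← mul_one (1 : 𝕜), ← monomial_mul, monomial_sum_one]
  simp [mGenV, colExp, X_pow_eq_monomial]

theorem setOf_mGenV_eq_image (𝕜 : Type*) [Field 𝕜] (v : ℕ → ℕ) (α : ℕ → ℕ → ℕ) (s n : ℕ) :
    {m | ∃ i j, i ≤ s ∧ i < j ∧ j ≤ n ∧ m = mGenV 𝕜 v α i j} =
      (fun e => monomial e (1 : 𝕜)) '' mExpSet v α s n := by
  ext
  simp only [mExpSet, mGenV_eq_monomial, Set.mem_image, Set.mem_ofPred_eq]
  aesop

theorem exists_mExp_le_add_iff {s n : ℕ} {α : ℕ → ℕ → ℕ} (hT : IsTable s n α) (hs : 1 ≤ s)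
    (m : ℕ →₀ ℕ) :
    (∃ e ∈ mExpSet id α s n, e ≤ m + Finsupp.single 1 (α 0 1 - α 1 1)) ↔
      ∃ e ∈ insert (Finsupp.single 1 (α 1 1))
        (mExpSet (· + 1) (dropFirstRowCol α) (s - 1) (n - 1)), e ≤ m := by
  obtain ⟨hsn, hzero, hcol, -⟩ := hT
  set u := Finsupp.single 1 (α 0 1 - α 1 1)
  have h11 : α 1 1 ≤ α 0 1 :=
    (single_le_sum (f := fun i => α i 1) (fun _ _ => Nat.zero_le _)
      (mem_Icc.2 ⟨le_rfl, hs⟩)).trans (hcol 1 le_rfl (by omega))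
  have h01 : mExp id α 0 1 = Finsupp.single 1 (α 1 1) + u := by
    rw [mExp_zero, ← Finsupp.single_add]
    congr 1
    omega
  have hshift (i j : ℕ) (hi : i ≤ s - 1) :
      mExp id α (i + 1) (j + 1) = mExp (· + 1) (dropFirstRowCol α) i j + u :=
    mExp_add_one_add_one α (fun r hr => by
      obtain ⟨hr2, hri⟩ := mem_Icc.1 hr
      exact hzero r 1 (by omega) (by omega) (by omega)) j
  constructor
  · rintro ⟨e, ⟨i, j, hi, hij, hjn, rfl⟩, hle⟩
    obtain _ | i := i
    · obtain _ | _ | j := j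
      · omega
      · rw [h01, add_le_add_iff_right] at hle
        exact ⟨_, Set.mem_insert _ _, hle⟩
      · refine ⟨_, Set.mem_insert_of_mem _ ⟨0, j + 1, by omega, by omega, by omega, rfl⟩, ?_⟩
        have hu : u (j + 1 + 1) = 0 := Finsupp.single_eq_of_ne (by omega)
        rw [mExp_zero, Finsupp.single_le_iff] at hle ⊢
        rw [id, Finsupp.add_apply, hu, add_zero] at hle
        exact (Nat.sub_le _ _).trans hle
    · obtain _ | j := j
      · omega
      rw [hshift i j (by omega), add_le_add_iff_right] at hle
      exact ⟨_, Set.mem_insert_of_mem _ ⟨i, j, by omega, by omega, by omega, rfl⟩, hle⟩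
  · rintro ⟨e, rfl | ⟨i, j, hi, hij, hjn, rfl⟩, hle⟩
    · exact ⟨_, ⟨0, 1, by omega, by omega, by omega, rfl⟩, h01 ▸ (add_le_add_iff_right u).2 hle⟩
    · exact ⟨_, ⟨i + 1, j + 1, by omega, by omega, by omega, rfl⟩,
        hshift i j hi ▸ (add_le_add_iff_right u).2 hle⟩

theorem stmt13_general (𝕜 : Type*) [Field 𝕜] (s n : ℕ) (α : ℕ → ℕ → ℕ) (hT : IsTable s n α)
    (hs : 1 ≤ s)
    (α' : ℕ → ℕ → ℕ)
    (hα' : ∀ i j, α' i j =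
      if i = 0 then α 0 (j + 1) - α 1 (j + 1) else α (i + 1) (j + 1)) :
    IsTable (s - 1) (n - 1) α' ∧
    Submodule.colon (KIdeal 𝕜 s n α)
        (Ideal.span {(X 1 : MvPolynomial ℕ 𝕜) ^ (α 0 1 - α 1 1)}) =
      Ideal.span (insert ((X 1 : MvPolynomial ℕ 𝕜) ^ α 1 1)
        {m | ∃ i j, i ≤ s - 1 ∧ i < j ∧ j ≤ n - 1 ∧
          m = mGenV 𝕜 (· + 1) α' i j}) := by
  obtain rfl : α' = dropFirstRowCol α := funext₂ hα'
  refine ⟨isTable_dropFirstRowCol α hT hs, ?_⟩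
  rw [KIdeal, show mGen 𝕜 α = mGenV 𝕜 id α from rfl, setOf_mGenV_eq_image,
    setOf_mGenV_eq_image, X_pow_eq_monomial, X_pow_eq_monomial,
    ← Set.image_insert_eq (f := fun e => monomial e (1 : 𝕜))]
  exact span_monomial_image_colon_eq _ (exists_mExp_le_add_iff hT hs)

/-- for a single `(s,n)`-table in normal form (default variable order),
the colon ideal `J = K(T) : (x_1^{d_1 − α_{1,1}})` is generated by `x_1^{α_{1,1}}`
together with the generators of the table ideal of the `(s−1, n−1)`-table `T'`
obtained by deleting the first row and column and replacing the top row entries by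
`d_j − α_{1,j}`, in the variables `x_2, …, x_n`. -/
theorem stmt13 (𝕜 : Type*) [Field 𝕜] (s n : ℕ) (α : ℕ → ℕ → ℕ) (hT : IsTable s n α)
    (hs : 1 ≤ s) (hproper : KIdeal 𝕜 s n α ≠ ⊤) (hNF : NormalForm s n α)
    (α' : ℕ → ℕ → ℕ)
    (hα' : ∀ i j, α' i j =
      if i = 0 then α 0 (j + 1) - α 1 (j + 1) else α (i + 1) (j + 1)) :
    IsTable (s - 1) (n - 1) α' ∧
    Submodule.colon (KIdeal 𝕜 s n α)
        (Ideal.span {(X 1 : MvPolynomial ℕ 𝕜) ^ (α 0 1 - α 1 1)}) =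
      Ideal.span (insert ((X 1 : MvPolynomial ℕ 𝕜) ^ α 1 1)
        {m | ∃ i j, i ≤ s - 1 ∧ i < j ∧ j ≤ n - 1 ∧
          m = mGenV 𝕜 (· + 1) α' i j}) :=
  stmt13_general 𝕜 s n α hT hs α' hα'
end

section
/- Let T be an (s,n)-table with s ≥ 1 whose last unconstrained column n is singular, i.e., d_n = ∑_{i=1}^{s} α_{i,n}. Let T' be the (s−1, n)-matrix obtained from T by deleting the last row and, if s > 1, replacing α_{s−1,s} by α_{s−1,s} + α_{s,s} (if s = 1, replacing d_1 by d_1 − α_{1,1} — but consider only s > 1 here). Then T' is again an (s−1, n)-table and K(T') = K(T). -/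
open MvPolynomial Finset

/-!
Write `m_{i,j} = P_i · x_j^{e_{i,j}}`. Singularity of column `n` gives `m_{s,n} = P_s`, and moving
`α_{s,s}` into `α_{s-1,s}` makes the new generator `m'_{s-1,s}` equal to `P_s` as well. So `P_s`
lies in both ideals; it divides every `m_{s,j}` and also `m_{s-1,s} = P_s · x_s^{α_{s,s}}`, while all
other generators are untouched.
-/

noncomputable def mGenPrefix (𝕜 : Type*) [Field 𝕜] (α : ℕ → ℕ → ℕ) (i : ℕ) :
    MvPolynomial ℕ 𝕜 :=
  ∏ t ∈ Finset.Icc 1 i, X t ^ (α 0 t - ∑ r ∈ Finset.Icc 1 i, α r t)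

/-- `T'` for a table `T` with rows up to `s + 1` (the paper's `s`). Row `s + 1` is left in place:
`IsTable s` and `KIdeal s` never read it. -/
def dropLastRow (s : ℕ) (α : ℕ → ℕ → ℕ) (i j : ℕ) : ℕ :=
  if i = s ∧ j = s + 1 then α s (s + 1) + α (s + 1) (s + 1) else α i j

section MGen

variable {𝕜 : Type*} [Field 𝕜]

lemma mGen_eq_mGenPrefix_mul (α : ℕ → ℕ → ℕ) (i j : ℕ) :
    mGen 𝕜 α i j = mGenPrefix 𝕜 α i * X j ^ (α 0 j - ∑ r ∈ Finset.Icc 1 i, α r j) := rfl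

lemma mGenPrefix_dvd_mGen (α : ℕ → ℕ → ℕ) (i j : ℕ) : mGenPrefix 𝕜 α i ∣ mGen 𝕜 α i j :=
  Dvd.intro _ (mGen_eq_mGenPrefix_mul α i j).symm

lemma mGen_eq_mGenPrefix_of_singular {α : ℕ → ℕ → ℕ} {i j : ℕ}
    (hsing : ∑ r ∈ Finset.Icc 1 i, α r j = α 0 j) : mGen 𝕜 α i j = mGenPrefix 𝕜 α i := by
  rw [mGen_eq_mGenPrefix_mul, hsing, Nat.sub_self, pow_zero, mul_one]

lemma mGenPrefix_congr {β γ : ℕ → ℕ → ℕ} {i : ℕ}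
    (h : ∀ r t, r ≤ i → t ≤ i → β r t = γ r t) : mGenPrefix 𝕜 β i = mGenPrefix 𝕜 γ i := by
  refine Finset.prod_congr rfl fun t ht => ?_
  have hti := (Finset.mem_Icc.1 ht).2
  rw [h 0 t (Nat.zero_le _) hti, Finset.sum_congr rfl fun r hr => h r t (Finset.mem_Icc.1 hr).2 hti]

lemma mGen_congr {β γ : ℕ → ℕ → ℕ} {i j : ℕ}
    (h : ∀ r t, r ≤ i → (t ≤ i ∨ t = j) → β r t = γ r t) :
    mGen 𝕜 β i j = mGen 𝕜 γ i j := by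
  rw [mGen_eq_mGenPrefix_mul, mGen_eq_mGenPrefix_mul,
    mGenPrefix_congr fun r t hr ht => h r t hr (.inl ht), h 0 j (Nat.zero_le _) (.inr rfl),
    Finset.sum_congr rfl fun r hr => h r j (Finset.mem_Icc.1 hr).2 (.inr rfl)]

lemma mGen_mem_kIdeal {s n i j : ℕ} (α : ℕ → ℕ → ℕ) (hi : i ≤ s) (hij : i < j) (hj : j ≤ n) :
    mGen 𝕜 α i j ∈ KIdeal 𝕜 s n α :=
  Ideal.subset_span ⟨i, j, hi, hij, hj, rfl⟩

end MGen

namespace dropLastRow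

variable {s n : ℕ} {α : ℕ → ℕ → ℕ}

lemma apply_of_ne_left {i : ℕ} (j : ℕ) (hi : i ≠ s) : dropLastRow s α i j = α i j :=
  if_neg fun h => hi h.1

lemma apply_of_ne_right (i : ℕ) {j : ℕ} (hj : j ≠ s + 1) : dropLastRow s α i j = α i j :=
  if_neg fun h => hj h.2

lemma apply_self : dropLastRow s α s (s + 1) = α s (s + 1) + α (s + 1) (s + 1) :=
  if_pos ⟨rfl, rfl⟩

lemma sum_col_of_ne {t : ℕ} (ht : t ≠ s + 1) :
    ∑ r ∈ Finset.Icc 1 s, dropLastRow s α r t = ∑ r ∈ Finset.Icc 1 s, α r t :=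
  Finset.sum_congr rfl fun r _ => apply_of_ne_right r ht

lemma sum_col_self (hs : 1 ≤ s) :
    ∑ r ∈ Finset.Icc 1 s, dropLastRow s α r (s + 1) = ∑ r ∈ Finset.Icc 1 (s + 1), α r (s + 1) := by
  obtain ⟨u, rfl⟩ : ∃ u, s = u + 1 := ⟨s - 1, by omega⟩
  rw [Finset.sum_Icc_succ_top (by omega), Finset.sum_Icc_succ_top (by omega),
    Finset.sum_Icc_succ_top (by omega), apply_self,
    Finset.sum_congr rfl fun r hr => apply_of_ne_left _ (by simp at hr; omega)]
  ring

lemma sum_row_self (hsn : s + 1 ≤ n) :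
    ∑ j ∈ Finset.Icc (s + 1) n, dropLastRow s α s j
      = ∑ j ∈ Finset.Icc (s + 1) n, α s j + α (s + 1) (s + 1) := by
  have hmem : s + 1 ∈ Finset.Icc (s + 1) n := Finset.mem_Icc.2 ⟨le_rfl, hsn⟩
  rw [← Finset.add_sum_erase _ _ hmem, ← Finset.add_sum_erase _ _ hmem, apply_self,
    Finset.sum_congr rfl fun j hj => apply_of_ne_right s (Finset.ne_of_mem_erase hj)]
  ring

lemma sum_col_le_of_isTable (hT : IsTable (s + 1) n α) (hs : 1 ≤ s) {j : ℕ}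
    (hj₁ : 1 ≤ j) (hjn : j ≤ n) :
    ∑ i ∈ Finset.Icc 1 s, dropLastRow s α i j ≤ dropLastRow s α 0 j := by
  rw [apply_of_ne_left j (by omega)]
  obtain rfl | hj := eq_or_ne j (s + 1)
  · exact sum_col_self hs ▸ hT.2.2.1 _ hj₁ hjn
  · calc ∑ i ∈ Finset.Icc 1 s, dropLastRow s α i j
        = ∑ i ∈ Finset.Icc 1 s, α i j := sum_col_of_ne hj
      _ ≤ ∑ i ∈ Finset.Icc 1 (s + 1), α i j :=
        Finset.sum_le_sum_of_subset (Finset.Icc_subset_Icc_right (by omega))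
      _ ≤ α 0 j := hT.2.2.1 j hj₁ hjn

lemma row_eq_of_isTable (hT : IsTable (s + 1) n α) (hs : 1 ≤ s) {k : ℕ}
    (hk₁ : 1 ≤ k) (hks : k ≤ s) :
    dropLastRow s α 0 k = ∑ i ∈ Finset.Icc 1 (k - 1), dropLastRow s α i k
      + ∑ j ∈ Finset.Icc (k + 1) n, dropLastRow s α k j
      + (if k + 1 ≤ s then dropLastRow s α (k + 1) (k + 1) else 0) := by
  have hrow := hT.2.2.2 k hk₁ (by omega)
  rw [apply_of_ne_left k (by omega),
    Finset.sum_congr rfl fun i _ => apply_of_ne_right i (show k ≠ s + 1 by omega)]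
  obtain rfl | hk := eq_or_ne k s
  · rw [if_neg (by omega), sum_row_self (by have := hT.1; omega), hrow, if_pos le_rfl]
    ring
  · rw [if_pos (by omega)] at hrow
    rw [if_pos (by omega), apply_of_ne_right _ (by omega),
      Finset.sum_congr rfl fun j _ => apply_of_ne_left j hk, hrow]

lemma isTable (hT : IsTable (s + 1) n α) (hs : 1 ≤ s) : IsTable s n (dropLastRow s α) :=
  ⟨by have := hT.1; omega,
    fun i j hi₁ his hji => by
      rw [apply_of_ne_right i (by omega)]; exact hT.2.1 i j hi₁ (by omega) hji,
    fun _ hj₁ hjn => sum_col_le_of_isTable hT hs hj₁ hjn,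
    fun _ hk₁ hks => row_eq_of_isTable hT hs hk₁ hks⟩

variable {𝕜 : Type*} [Field 𝕜]

lemma mGen_of_ne {i j : ℕ} (hi : i ≤ s) (hij : ¬(i = s ∧ j = s + 1)) :
    mGen 𝕜 (dropLastRow s α) i j = mGen 𝕜 α i j :=
  mGen_congr fun r t hr ht => if_neg fun ⟨hrs, hts⟩ => by omega

lemma mGenPrefix_self : mGenPrefix 𝕜 (dropLastRow s α) s = mGenPrefix 𝕜 α s :=
  mGenPrefix_congr fun r _ _ ht => apply_of_ne_right r (by omega)

/-- The merged entry makes column `s + 1` look, to row `s`, as it does to row `s + 1`. -/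
lemma mGen_self_eq_mGenPrefix (hT : IsTable (s + 1) n α) (hs : 1 ≤ s) :
    mGen 𝕜 (dropLastRow s α) s (s + 1) = mGenPrefix 𝕜 α (s + 1) := by
  rw [mGen_eq_mGenPrefix_mul, mGenPrefix_self, apply_of_ne_left _ (by omega), sum_col_self hs,
    mGenPrefix, mGenPrefix, Finset.prod_Icc_succ_top (by omega)]
  congr 1
  refine Finset.prod_congr rfl fun t ht => ?_
  rw [Finset.sum_Icc_succ_top (by omega),
    hT.2.1 (s + 1) t (by omega) le_rfl (by simp at ht; omega), add_zero]

lemma mGen_eq_mGen_self_mul (hT : IsTable (s + 1) n α) (hs : 1 ≤ s) :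
    mGen 𝕜 α s (s + 1) = mGen 𝕜 (dropLastRow s α) s (s + 1) * X (s + 1) ^ α (s + 1) (s + 1) := by
  have hcol := hT.2.2.1 (s + 1) (by omega) (by have := hT.1; omega)
  rw [Finset.sum_Icc_succ_top (by omega)] at hcol
  rw [mGen_eq_mGenPrefix_mul, mGen_eq_mGenPrefix_mul, mul_assoc, ← pow_add, mGenPrefix_self,
    apply_of_ne_left _ (by omega), sum_col_self hs, Finset.sum_Icc_succ_top (by omega)]
  congr 2
  omega

lemma kIdeal_eq (hT : IsTable (s + 1) n α) (hs : 1 ≤ s)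
    (hsing : ∑ i ∈ Finset.Icc 1 (s + 1), α i n = α 0 n) :
    KIdeal 𝕜 s n (dropLastRow s α) = KIdeal 𝕜 (s + 1) n α := by
  have hsn := hT.1
  have hself : mGen 𝕜 (dropLastRow s α) s (s + 1) ∈ KIdeal 𝕜 (s + 1) n α := by
    rw [mGen_self_eq_mGenPrefix hT hs, ← mGen_eq_mGenPrefix_of_singular hsing]
    exact mGen_mem_kIdeal α le_rfl hsn le_rfl
  have hself' : mGen 𝕜 (dropLastRow s α) s (s + 1) ∈ KIdeal 𝕜 s n (dropLastRow s α) :=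
    mGen_mem_kIdeal _ le_rfl (by omega) (by omega)
  refine le_antisymm (Ideal.span_le.2 ?_) (Ideal.span_le.2 ?_)
  · rintro _ ⟨i, j, hi, hij, hjn, rfl⟩
    by_cases hc : i = s ∧ j = s + 1
    · obtain ⟨rfl, rfl⟩ := hc
      exact hself
    · rw [mGen_of_ne hi hc]
      exact mGen_mem_kIdeal α (by omega) hij hjn
  · rintro _ ⟨i, j, hi, hij, hjn, rfl⟩
    by_cases hlast : i = s + 1
    · subst hlast
      refine Ideal.mem_of_dvd _ ?_ hself'
      rw [mGen_self_eq_mGenPrefix hT hs]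
      exact mGenPrefix_dvd_mGen α _ j
    by_cases hc : i = s ∧ j = s + 1
    · obtain ⟨rfl, rfl⟩ := hc
      rw [mGen_eq_mGen_self_mul hT hs]
      exact Ideal.mul_mem_right _ _ hself'
    · rw [← mGen_of_ne (by omega) hc]
      exact mGen_mem_kIdeal _ (by omega) hij hjn

end dropLastRow

/-- removing a singularity in the unconstrained column `n` (for `s > 1`):
deleting the last row and adding `α_{s,s}` to `α_{s−1,s}` yields an `(s−1,n)`-table
with the same associated ideal. -/
theorem stmt17 (𝕜 : Type*) [Field 𝕜] (s n : ℕ) (α : ℕ → ℕ → ℕ) (hT : IsTable s n α)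
    (hs : 2 ≤ s) (hsing : ∑ i ∈ Finset.Icc 1 s, α i n = α 0 n)
    (α' : ℕ → ℕ → ℕ)
    (hα' : ∀ i j, α' i j =
      if i = s - 1 ∧ j = s then α (s - 1) s + α s s else α i j) :
    IsTable (s - 1) n α' ∧ KIdeal 𝕜 (s - 1) n α' = KIdeal 𝕜 s n α := by
  obtain ⟨s, rfl⟩ : ∃ u, s = u + 1 := ⟨s - 1, by omega⟩
  obtain rfl : α' = dropLastRow s α := funext₂ hα'
  exact ⟨dropLastRow.isTable hT (by omega), dropLastRow.kIdeal_eq hT (by omega) hsing⟩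
end

section
/- Let T be an (s,n)-table whose last column n is an unconstrained zero column, i.e., α_{1,n} = ⋯ = α_{s,n} = 0. Let T' be the (s, n−1)-table obtained by deleting column n. Then T' is again a table, and K(T) equals K(T') + (x_n^{d_n}) in k[x_1,...,x_n]; i.e., T reduces to the disjoint union of T' and the singleton table (d_n) without changing the associated ideal. -/
open MvPolynomial Finset

theorem IsTable.of_zero_last_column {s n : ℕ} {α : ℕ → ℕ → ℕ} (hT : IsTable s n α)
    (hn : s + 1 < n) (hz : ∀ i, 1 ≤ i → i ≤ s → α i n = 0) : IsTable s (n - 1) α := by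
  obtain ⟨-, hzero, hcol, hrow⟩ := hT
  refine ⟨by omega, hzero, fun j h1 h2 => hcol j h1 (by omega), fun k hk1 hk2 => ?_⟩
  have hsplit : Icc (k + 1) n = insert n (Icc (k + 1) (n - 1)) := by
    ext x; simp only [mem_Icc, mem_insert]; omega
  rw [hrow k hk1 hk2, hsplit, sum_insert (by simp only [mem_Icc]; omega), hz k hk1 hk2, zero_add]

theorem mGen_zero_left (𝕜 : Type*) [Field 𝕜] (α : ℕ → ℕ → ℕ) (j : ℕ) :
    mGen 𝕜 α 0 j = X j ^ α 0 j := by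
  simp [mGen, mGenV]

theorem X_pow_dvd_mGen_of_zero_column (𝕜 : Type*) [Field 𝕜] {s j : ℕ} {α : ℕ → ℕ → ℕ}
    (hz : ∀ i, 1 ≤ i → i ≤ s → α i j = 0) {i : ℕ} (hi : i ≤ s) :
    X j ^ α 0 j ∣ mGen 𝕜 α i j := by
  have hsum : ∑ r ∈ Icc 1 i, α r j = 0 :=
    sum_eq_zero fun r hr => hz r (mem_Icc.mp hr).1 ((mem_Icc.mp hr).2.trans hi)
  unfold mGen mGenV
  rw [hsum, Nat.sub_zero]
  exact dvd_mul_left _ _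

theorem KIdeal_eq_sup_span_last_column (𝕜 : Type*) [Field 𝕜] {s n : ℕ} (α : ℕ → ℕ → ℕ)
    (hsn : s < n) :
    KIdeal 𝕜 s n α =
      KIdeal 𝕜 s (n - 1) α ⊔ Ideal.span {m | ∃ i ≤ s, m = mGen 𝕜 α i n} := by
  rw [KIdeal, KIdeal, ← Ideal.span_union]
  congr 1
  ext m
  simp only [Set.mem_union, Set.mem_ofPred_eq]
  constructor
  · rintro ⟨i, j, his, hij, hjn, rfl⟩
    rcases hjn.eq_or_lt with rfl | hlt
    · exact Or.inr ⟨i, his, rfl⟩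
    · exact Or.inl ⟨i, j, his, hij, by omega, rfl⟩
  · rintro (⟨i, j, his, hij, hjn, rfl⟩ | ⟨i, his, rfl⟩)
    · exact ⟨i, j, his, hij, by omega, rfl⟩
    · exact ⟨i, n, his, by omega, le_rfl, rfl⟩

theorem span_mGen_column_eq_of_zero_column (𝕜 : Type*) [Field 𝕜] {s j : ℕ} {α : ℕ → ℕ → ℕ}
    (hz : ∀ i, 1 ≤ i → i ≤ s → α i j = 0) :
    Ideal.span {m | ∃ i ≤ s, m = mGen 𝕜 α i j} = Ideal.span {X j ^ α 0 j} := by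
  apply le_antisymm
  · rw [Ideal.span_le]
    rintro m ⟨i, his, rfl⟩
    exact Ideal.mem_span_singleton.mpr (X_pow_dvd_mGen_of_zero_column 𝕜 hz his)
  · rw [Ideal.span_singleton_le_iff_mem, ← mGen_zero_left]
    exact Ideal.subset_span ⟨0, Nat.zero_le s, rfl⟩

/-- removing an unconstrained zero column: if `α_{1,n} = ⋯ = α_{s,n} = 0`,
then deleting column `n` yields an `(s, n−1)`-table `T'` and
`K(T) = K(T') + (x_n^{d_n})`. -/
theorem stmt18 (𝕜 : Type*) [Field 𝕜] (s n : ℕ) (α : ℕ → ℕ → ℕ) (hT : IsTable s n α)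
    (hn : s + 1 < n) (hz : ∀ i, 1 ≤ i → i ≤ s → α i n = 0) :
    IsTable s (n - 1) α ∧
    KIdeal 𝕜 s n α = KIdeal 𝕜 s (n - 1) α ⊔
      Ideal.span {(X n : MvPolynomial ℕ 𝕜) ^ α 0 n} :=
  ⟨hT.of_zero_last_column hn hz, by
    rw [KIdeal_eq_sup_span_last_column 𝕜 α hT.1, span_mGen_column_eq_of_zero_column 𝕜 hz]⟩
end

section
/- Let T be an (s,n)-table and suppose α_{i,i} = 0 for some 1 ≤ i ≤ s. Let T' be the matrix obtained from T by deleting rows i, i+1, ..., s (keeping rows 0 through i−1). Then T' is an (i−1, n)-table and K(T') = K(T). -/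
open MvPolynomial Finset

/-!
If `α_{k+1,k+1} = 0`, then, the table being upper triangular, rows `k+1, …, s` contribute
nothing to the columns `t ≤ k+1`. So for every `a > k` the first `k+1` factors of `m_{a,b}`
have the same exponents as in `m_{k,k+1}`, i.e. `m_{k,k+1} ∣ m_{a,b}`, and the generators
from the deleted rows are redundant. The table axioms for rows `≤ k` only involve rows `≤ k`,
except for the diagonal term `α_{k+1,k+1}`, which is `0`.
-/

theorem sum_Icc_eq_of_diag_eq_zero {s k a t : ℕ} {α : ℕ → ℕ → ℕ}
    (hrows : ∀ r t, 1 ≤ r → r ≤ s → t < r → α r t = 0) (hz : α (k + 1) (k + 1) = 0)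
    (hka : k ≤ a) (has : a ≤ s) (ht : t ≤ k + 1) :
    ∑ r ∈ Icc 1 a, α r t = ∑ r ∈ Icc 1 k, α r t := by
  refine (sum_subset (Icc_subset_Icc_right hka) fun r hr hr' => ?_).symm
  simp only [mem_Icc, not_and, not_le] at hr hr'
  have hkr := hr' hr.1
  obtain hrt | ⟨rfl, rfl⟩ : t < r ∨ r = k + 1 ∧ t = k + 1 := by omega
  · exact hrows r t hr.1 (by omega) hrt
  · exact hz

theorem mGen_succ_eq_prod (𝕜 : Type*) [Field 𝕜] (α : ℕ → ℕ → ℕ) (k : ℕ) :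
    mGen 𝕜 α k (k + 1) = ∏ t ∈ Icc 1 (k + 1), X t ^ (α 0 t - ∑ r ∈ Icc 1 k, α r t) := by
  rw [prod_Icc_succ_top (by omega)]
  rfl

theorem mGen_succ_dvd_mGen (𝕜 : Type*) [Field 𝕜] {α : ℕ → ℕ → ℕ} {k a : ℕ} (b : ℕ)
    (hka : k < a) (hsum : ∀ t ≤ k + 1, ∑ r ∈ Icc 1 a, α r t = ∑ r ∈ Icc 1 k, α r t) :
    mGen 𝕜 α k (k + 1) ∣ mGen 𝕜 α a b := by
  have hprefix : mGen 𝕜 α k (k + 1) =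
      ∏ t ∈ Icc 1 (k + 1), X t ^ (α 0 t - ∑ r ∈ Icc 1 a, α r t) := by
    rw [mGen_succ_eq_prod]
    refine prod_congr rfl fun t ht => ?_
    rw [hsum t (mem_Icc.mp ht).2]
  rw [hprefix]
  exact (prod_dvd_prod_of_subset _ _ _ (Icc_subset_Icc_right hka)).mul_right _

theorem KIdeal_mono (𝕜 : Type*) [Field 𝕜] {s s' : ℕ} (n : ℕ) (α : ℕ → ℕ → ℕ) (h : s ≤ s') :
    KIdeal 𝕜 s n α ≤ KIdeal 𝕜 s' n α := by
  refine Ideal.span_mono ?_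
  rintro m ⟨a, b, has, hab, hbn, rfl⟩
  exact ⟨a, b, has.trans h, hab, hbn, rfl⟩

theorem KIdeal_eq_of_mGen_mem (𝕜 : Type*) [Field 𝕜] {s s' : ℕ} (n : ℕ) (α : ℕ → ℕ → ℕ)
    (h : s ≤ s')
    (hmem : ∀ a b, s < a → a ≤ s' → a < b → b ≤ n → mGen 𝕜 α a b ∈ KIdeal 𝕜 s n α) :
    KIdeal 𝕜 s n α = KIdeal 𝕜 s' n α := by
  refine le_antisymm (KIdeal_mono 𝕜 n α h) (Ideal.span_le.mpr ?_)
  rintro m ⟨a, b, has, hab, hbn, rfl⟩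
  by_cases hsa : a ≤ s
  · exact Ideal.subset_span ⟨a, b, hsa, hab, hbn, rfl⟩
  · exact hmem a b (by omega) has hab hbn

namespace IsTable

variable {s n k : ℕ} {α : ℕ → ℕ → ℕ}

theorem of_diag_eq_zero (hT : IsTable s n α) (hks : k < s) (hz : α (k + 1) (k + 1) = 0) :
    IsTable k n α := by
  obtain ⟨hsn, hrows, hcol, hrow⟩ := hT
  refine ⟨by omega, fun r t hr hrk => hrows r t hr (by omega), fun j hj hjn => ?_,
    fun r hr hrk => ?_⟩
  · exact (sum_le_sum_of_subset (Icc_subset_Icc_right hks.le)).trans (hcol j hj hjn)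
  · rw [hrow r hr (by omega), if_pos (by omega : r + 1 ≤ s)]
    split_ifs
    · rfl
    · obtain rfl : r = k := by omega
      rw [hz]

theorem KIdeal_eq_of_diag_eq_zero (𝕜 : Type*) [Field 𝕜] (hT : IsTable s n α) (hks : k < s)
    (hz : α (k + 1) (k + 1) = 0) : KIdeal 𝕜 k n α = KIdeal 𝕜 s n α := by
  refine KIdeal_eq_of_mGen_mem 𝕜 n α hks.le fun a b hka has _ _ => ?_
  have hdvd : mGen 𝕜 α k (k + 1) ∣ mGen 𝕜 α a b :=
    mGen_succ_dvd_mGen 𝕜 b hka fun t ht =>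
      sum_Icc_eq_of_diag_eq_zero hT.2.1 hz hka.le has ht
  exact Ideal.mem_of_dvd _ hdvd
    (Ideal.subset_span ⟨k, k + 1, le_rfl, k.lt_succ_self, hks.trans hT.1, rfl⟩)

end IsTable

/-- cutting at `α_{i,i} = 0`: if `1 ≤ i ≤ s` and `α_{i,i} = 0`, then
keeping only rows `0, …, i−1` yields an `(i−1, n)`-table with the same ideal. -/
theorem stmt19 (𝕜 : Type*) [Field 𝕜] (s n : ℕ) (α : ℕ → ℕ → ℕ) (hT : IsTable s n α)
    (i : ℕ) (hi1 : 1 ≤ i) (his : i ≤ s) (hz : α i i = 0) :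
    IsTable (i - 1) n α ∧ KIdeal 𝕜 (i - 1) n α = KIdeal 𝕜 s n α := by
  obtain ⟨k, rfl⟩ : ∃ k, i = k + 1 := ⟨i - 1, by omega⟩
  rw [Nat.add_sub_cancel]
  exact ⟨hT.of_diag_eq_zero his hz, hT.KIdeal_eq_of_diag_eq_zero 𝕜 his hz⟩
end
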